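/- arXiv:2003.08969 — 3 statements merged into one kernel-verified Lean document; each statement's English description precedes it below -/
import Mathlib

section
/- For a C² function φ on ℝ^N with ∇φ(x) ≠ 0, the midpoint combination (1/2) max_{y ∈ B̄_ε(x)} φ(y) + (1/2) min_{y ∈ B̄_ε(x)} φ(y) - φ(x) equals (ε²/2) ⟨D²φ(x) w, w⟩ + o(ε²) as ε → 0, where w = ∇φ(x)/|∇φ(x)|. -/
/-
Up to `o(ε²)`, `φ` agrees on `B̄_ε(x)` with its second-order Taylor model
`φ x + ⟪g, z⟫ + D²φ(x) z z / 2`, `g = ∇φ(x)`, `z = y - x`. Writing `z = ε w + u` with `w = g / ‖g‖`,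
the constraint `‖z‖ ≤ ε` reads `2 ε ⟪w, u⟫ + ‖u‖² ≤ 0`, so moving away from `ε w` costs
`‖g‖ ‖u‖² / (2ε)` in the linear term but gains only `O(ε ‖u‖)` in the quadratic one; by AM-GM the
maximum of the model exceeds its value at `ε w` by `O(ε³)`. Hence
`max φ = φ x + ε ‖g‖ + ε²/2 D²φ(x) w w + o(ε²)`, the same applied to `-φ` gives the minimum, and
the first-order terms cancel in the average.
-/

open Asymptotics Metric Set
open scoped RealInnerProductSpace Topology

section Normed

variable {E : Type*} [NormedAddCommGroup E]

theorem eventually_forall_closedBall_abs_le_of_isLittleO {R : E → ℝ} {x : E}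
    (hR : R =o[𝓝 x] fun y => ‖y - x‖ ^ 2) {c : ℝ} (hc : 0 < c) :
    ∀ᶠ ε in 𝓝[>] (0 : ℝ), ∀ y ∈ closedBall x ε, |R y| ≤ c * ε ^ 2 := by
  obtain ⟨δ, hδ, hR⟩ := Metric.eventually_nhds_iff.mp (hR.def hc)
  filter_upwards [Ioo_mem_nhdsGT hδ] with ε ⟨_, hεδ⟩ y hy
  have hyx : ‖y - x‖ ≤ ε := mem_closedBall_iff_norm.mp hy
  calc |R y| ≤ c * ‖y - x‖ ^ 2 := by simpa using hR (lt_of_le_of_lt hy hεδ)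
    _ ≤ c * ε ^ 2 := by gcongr

variable [NormedSpace ℝ E]

theorem ContDiff.isLittleO_taylor_two {f : E → ℝ} (hf : ContDiff ℝ 2 f) (x : E) :
    (fun y => f y - f x - fderiv ℝ f x (y - x) - fderiv ℝ (fderiv ℝ f) x (y - x) (y - x) / 2)
      =o[𝓝 x] fun y => ‖y - x‖ ^ 2 := by
  set B := fderiv ℝ (fderiv ℝ f) x
  have hf' : ∀ y, HasFDerivAt f (fderiv ℝ f y) y :=
    fun y => (hf.differentiable (by norm_num) y).hasFDerivAt
  have hB : HasFDerivAt (fderiv ℝ f) B x :=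
    ((hf.fderiv_right (m := 1) le_rfl).differentiable one_ne_zero x).hasFDerivAt
  have hsymm : ∀ u v, B u v = B v u := second_derivative_symmetric hf' hB
  have hsub (y : E) : HasFDerivAt (fun y : E => y - x) (ContinuousLinearMap.id ℝ E) y :=
    (hasFDerivAt_id y).sub_const x
  have hderiv (y : E) : HasFDerivAt
      (fun y => f y - fderiv ℝ f x (y - x) - B (y - x) (y - x) / 2)
      (fderiv ℝ f y - fderiv ℝ f x - B (y - x)) y := by
    have h := ((hf' y).sub ((fderiv ℝ f x).hasFDerivAt.comp y (hsub y))).sub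
      ((B.hasFDerivAt_of_bilinear (hsub y) (hsub y)).mul_const (1 / 2 : ℝ))
    refine (h.congr_fderiv ?_).congr_of_eventuallyEq (.of_forall fun z => ?_)
    · ext v
      simp only [ContinuousLinearMap.comp_id, ContinuousLinearMap.precompR_apply, map_sub,
        sub_apply, ContinuousLinearMap.compL_apply, smul_add, add_apply, smul_apply, smul_eq_mul,
        ContinuousLinearMap.precompL_apply, ContinuousLinearMap.id_apply, hsymm v y, hsymm v x]
      ring
    · simp only [Pi.sub_apply, Function.comp_apply]
      ring
  have hsmall : (fun y => fderiv ℝ f y - fderiv ℝ f x - B (y - x)) =o[𝓝[univ] x]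
      fun y => ‖y - x‖ ^ 1 := by
    simpa using (hasFDerivAt_iff_isLittleO.mp hB).norm_right
  have := convex_univ.isLittleO_pow_succ (mem_univ x)
    (fun y _ => (hderiv y).hasFDerivWithinAt) hsmall
  simp only [sub_self, map_zero, zero_div, sub_zero, nhdsWithin_univ] at this
  exact this.congr_left fun y => by ring

theorem ContinuousLinearMap.norm_apply_self_sub_apply_self_le
    (B : E →L[ℝ] E →L[ℝ] ℝ) (a b : E) :
    ‖B a a - B b b‖ ≤ ‖B‖ * (‖a‖ + ‖b‖) * ‖a - b‖ :=
  calc ‖B a a - B b b‖ = ‖B a (a - b) + B (a - b) b‖ := by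
          rw [map_sub, map_sub, sub_apply, sub_add_sub_cancel]
    _ ≤ ‖B‖ * ‖a‖ * ‖a - b‖ + ‖B‖ * ‖a - b‖ * ‖b‖ :=
      (norm_add_le _ _).trans (add_le_add (B.le_opNorm₂ _ _) (B.le_opNorm₂ _ _))
    _ = ‖B‖ * (‖a‖ + ‖b‖) * ‖a - b‖ := by ring

end Normed

section InnerProduct

variable {E : Type*} [NormedAddCommGroup E] [InnerProductSpace ℝ E]

theorem inner_add_apply_self_le_of_norm_le (B : E →L[ℝ] E →L[ℝ] ℝ) {g z : E} (hg : g ≠ 0)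
    {ε : ℝ} (hε : 0 < ε) (hz : ‖z‖ ≤ ε) :
    ⟪g, z⟫ + B z z / 2 ≤ ε * ‖g‖ + ε ^ 2 / 2 * B (‖g‖⁻¹ • g) (‖g‖⁻¹ • g)
      + ‖B‖ ^ 2 * ε ^ 3 / (2 * ‖g‖) := by
  set G := ‖g‖ with hGdef
  have hG : 0 < G := norm_pos_iff.mpr hg
  set w := G⁻¹ • g
  have hw : ‖w‖ = 1 := by rw [norm_smul, norm_inv, norm_norm, ← hGdef, inv_mul_cancel₀ hG.ne']
  have hgw : g = G • w := by simp [w, hG.ne']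
  clear_value w G
  subst hgw
  have hεw : ‖ε • w‖ = ε := by simp [norm_smul, hw, hε.le]
  obtain ⟨u, rfl⟩ : ∃ u, z = ε • w + u := ⟨z - ε • w, by abel⟩
  have hpar : 2 * ε * ⟪w, u⟫ + ‖u‖ ^ 2 ≤ 0 := by
    have : ‖ε • w + u‖ ^ 2 = ε ^ 2 + 2 * ε * ⟪w, u⟫ + ‖u‖ ^ 2 := by
      rw [norm_add_sq_real, hεw, real_inner_smul_left]; ring
    nlinarith [norm_nonneg (ε • w + u)]
  have hB : B (ε • w + u) (ε • w + u) - B (ε • w) (ε • w) ≤ 2 * ‖B‖ * ε * ‖u‖ := by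
    have := (le_abs_self _).trans (B.norm_apply_self_sub_apply_self_le (ε • w + u) (ε • w))
    rw [hεw, add_sub_cancel_left] at this
    nlinarith [mul_nonneg (mul_nonneg (norm_nonneg B) (sub_nonneg.2 hz)) (norm_nonneg u)]
  have hBw : B (ε • w) (ε • w) = ε ^ 2 * B w w := by
    simp only [map_smul, smul_apply, smul_eq_mul]; ring
  have hinner : ⟪G • w, ε • w + u⟫ = ε * G + G * ⟪w, u⟫ := by
    rw [inner_add_right, real_inner_smul_left, real_inner_smul_left,
      real_inner_smul_right, real_inner_self_eq_norm_sq, hw]; ring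
  -- AM-GM: `2 G ‖B‖ ε² ‖u‖ ≤ G² ‖u‖² + ‖B‖² ε⁴`
  have hamgm : ε * (2 * G * (G * ⟪w, u⟫ + ‖B‖ * ε * ‖u‖)) ≤ ε * (‖B‖ ^ 2 * ε ^ 3) := by
    nlinarith [sq_nonneg (G * ‖u‖ - ‖B‖ * ε ^ 2), mul_le_mul_of_nonneg_left hpar (sq_nonneg G)]
  have hcubic : G * ⟪w, u⟫ + ‖B‖ * ε * ‖u‖ ≤ ‖B‖ ^ 2 * ε ^ 3 / (2 * G) := by
    rw [le_div_iff₀ (by positivity)]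
    nlinarith [le_of_mul_le_mul_left hamgm hε]
  rw [hinner]
  linarith

theorem isLittleO_sSup_image_closedBall {f : E → ℝ} {x g : E} {B : E →L[ℝ] E →L[ℝ] ℝ}
    (hg : g ≠ 0)
    (hf : (fun y => f y - f x - ⟪g, y - x⟫ - B (y - x) (y - x) / 2) =o[𝓝 x]
      fun y => ‖y - x‖ ^ 2) :
    (fun ε : ℝ => sSup (f '' closedBall x ε) - f x - ε * ‖g‖
      - ε ^ 2 / 2 * B (‖g‖⁻¹ • g) (‖g‖⁻¹ • g)) =o[𝓝[>] (0 : ℝ)] fun ε => ε ^ 2 := by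
  set w := ‖g‖⁻¹ • g
  have hG : 0 < ‖g‖ := norm_pos_iff.mpr hg
  refine isLittleO_iff.mpr fun c hc => ?_
  have hcubic : ∀ᶠ ε in 𝓝[>] (0 : ℝ), ‖B‖ ^ 2 * ε ^ 3 / (2 * ‖g‖) ≤ c / 2 * ε ^ 2 := by
    filter_upwards [Ioo_mem_nhdsGT (show 0 < c * ‖g‖ / (‖B‖ ^ 2 + 1) by positivity)]
      with ε ⟨hε, hεc⟩
    rw [lt_div_iff₀ (by positivity)] at hεc
    rw [div_le_iff₀ (by positivity)]
    nlinarith [mul_le_mul_of_nonneg_left hεc.le (sq_nonneg ε)]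
  filter_upwards [self_mem_nhdsWithin, hcubic,
    eventually_forall_closedBall_abs_le_of_isLittleO hf (half_pos hc)]
    with ε (hε : 0 < ε) hcubic_ε hR
  have hmodel : ⟪g, ε • w⟫ + B (ε • w) (ε • w) / 2 = ε * ‖g‖ + ε ^ 2 / 2 * B w w := by
    simp only [w, inner_smul_right, real_inner_self_eq_norm_sq, map_smul, smul_apply, smul_eq_mul]
    field_simp
  have hupper : ∀ y ∈ closedBall x ε, f y ≤ f x + ε * ‖g‖ + ε ^ 2 / 2 * B w w + c * ε ^ 2 := by
    intro y hy
    have := inner_add_apply_self_le_of_norm_le B hg hε (mem_closedBall_iff_norm.mp hy)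
    have := abs_le.mp (hR y hy)
    linarith
  have hεw : x + ε • w ∈ closedBall x ε := by
    simp [w, norm_smul, hG.ne', abs_of_pos hε]
  have hlower : f x + ε * ‖g‖ + ε ^ 2 / 2 * B w w - c / 2 * ε ^ 2 ≤ f (x + ε • w) := by
    have := (abs_le.mp (hR _ hεw)).1
    rw [add_sub_cancel_left] at this
    linarith
  have hsup_le : sSup (f '' closedBall x ε) ≤ f x + ε * ‖g‖ + ε ^ 2 / 2 * B w w + c * ε ^ 2 :=
    csSup_le ((nonempty_closedBall.mpr hε.le).image f) (forall_mem_image.mpr hupper)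
  have hle_sup : f (x + ε • w) ≤ sSup (f '' closedBall x ε) :=
    le_csSup ⟨_, forall_mem_image.mpr hupper⟩ (mem_image_of_mem f hεw)
  rw [Real.norm_eq_abs, Real.norm_of_nonneg (sq_nonneg ε), abs_le]
  constructor <;> linarith

theorem isLittleO_sInf_image_closedBall {f : E → ℝ} {x g : E} {B : E →L[ℝ] E →L[ℝ] ℝ}
    (hg : g ≠ 0)
    (hf : (fun y => f y - f x - ⟪g, y - x⟫ - B (y - x) (y - x) / 2) =o[𝓝 x]
      fun y => ‖y - x‖ ^ 2) :
    (fun ε : ℝ => sInf (f '' closedBall x ε) - f x + ε * ‖g‖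
      - ε ^ 2 / 2 * B (‖g‖⁻¹ • g) (‖g‖⁻¹ • g)) =o[𝓝[>] (0 : ℝ)] fun ε => ε ^ 2 := by
  have hf_neg : (fun y => (-f) y - (-f) x - ⟪-g, y - x⟫ - (-B) (y - x) (y - x) / 2) =o[𝓝 x]
      fun y => ‖y - x‖ ^ 2 :=
    hf.neg_left.congr_left fun y => by
      simp only [Pi.neg_apply, inner_neg_left, neg_apply]
      ring
  have hneg := isLittleO_sSup_image_closedBall (neg_ne_zero.mpr hg) hf_neg
  refine hneg.neg_left.congr_left fun ε => ?_
  have himage : (-f) '' closedBall x ε = -(f '' closedBall x ε) := by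
    rw [← image_neg_eq_neg, image_image]; rfl
  rw [himage, Real.sInf_def]
  simp only [norm_neg, smul_neg, map_neg, neg_apply, Pi.neg_apply]
  ring

end InnerProduct

/-- For a `C²` function `φ` with `∇φ(x) ≠ 0`,
`½ max_{B̄_ε(x)} φ + ½ min_{B̄_ε(x)} φ - φ(x) = (ε²/2)⟨D²φ(x) w, w⟩ + o(ε²)` as `ε → 0⁺`,
where `w = ∇φ(x)/|∇φ(x)|`. -/
theorem statement5 (N : ℕ) (φ : EuclideanSpace ℝ (Fin N) → ℝ) (hφ : ContDiff ℝ 2 φ)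
    (x : EuclideanSpace ℝ (Fin N)) (hg : gradient φ x ≠ 0) :
    (fun ε : ℝ =>
        (1 / 2) * sSup (φ '' Metric.closedBall x ε) +
            (1 / 2) * sInf (φ '' Metric.closedBall x ε) - φ x -
          ε ^ 2 / 2 *
            iteratedFDeriv ℝ 2 φ x
              ![‖gradient φ x‖⁻¹ • gradient φ x, ‖gradient φ x‖⁻¹ • gradient φ x])
      =o[𝓝[>] (0 : ℝ)] fun ε => ε ^ 2 := by
  have htaylor : (fun y => φ y - φ x - ⟪gradient φ x, y - x⟫
      - fderiv ℝ (fderiv ℝ φ) x (y - x) (y - x) / 2) =o[𝓝 x] fun y => ‖y - x‖ ^ 2 := by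
    simpa only [inner_gradient_left] using hφ.isLittleO_taylor_two x
  refine (((isLittleO_sSup_image_closedBall hg htaylor).add
    (isLittleO_sInf_image_closedBall hg htaylor)).const_mul_left (1 / 2)).congr_left fun ε => ?_
  rw [iteratedFDeriv_two_apply]
  simp only [Matrix.cons_val_zero, Matrix.cons_val_one]
  ring
end

section
/- Consider the one-dimensional process arising from the 'pull towards 0' strategy in the Tug-of-War game: with probability 1/2, |x_{k+1}| ≤ |x_k| + ε, and with probability 1/2, |x_{k+1}| = |x_k| + ε³/2^k − ε. Then the sequence N_k = |x_k| + ε³/2^k is a supermartingale: E[N_{k+1} | N_k] ≤ N_k. -/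
open MeasureTheory

theorem MeasureTheory.condExp_add_const {Ω : Type*} {m m₀ : MeasurableSpace Ω} {μ : Measure Ω}
    [IsFiniteMeasure μ] (hm : m ≤ m₀) {f : Ω → ℝ} (hf : Integrable f μ) (c : ℝ) :
    μ[fun ω => f ω + c | m] =ᵐ[μ] fun ω => μ[f | m] ω + c := by
  have h := condExp_add hf (integrable_const c) m
  rwa [condExp_const hm] at h

theorem MeasureTheory.supermartingale_add_const_of_condExp_le {Ω : Type*} {m₀ : MeasurableSpace Ω}
    {μ : Measure Ω} [IsFiniteMeasure μ] {ℱ : Filtration ℕ m₀} {X : ℕ → Ω → ℝ} {c : ℕ → ℝ}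
    (hadapt : Adapted ℱ fun k ω => X k ω + c k) (hint : ∀ k, Integrable (X k) μ)
    (hstep : ∀ k, μ[X (k + 1) | ℱ k] ≤ᵐ[μ] fun ω => X k ω + c k - c (k + 1)) :
    Supermartingale (fun k ω => X k ω + c k) ℱ μ := by
  refine supermartingale_nat hadapt.stronglyAdapted (fun k => (hint k).add (integrable_const _))
    fun k => ?_
  filter_upwards [condExp_add_const (ℱ.le k) (hint (k + 1)) (c (k + 1)), hstep k] with ω hadd hω
  rw [hadd]
  linarith

theorem statement11_general {Ω : Type*} [m : MeasurableSpace Ω] (μ : Measure Ω)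
    [IsProbabilityMeasure μ] (ℱ : Filtration ℕ m) (N : ℕ)
    (x : ℕ → Ω → EuclideanSpace ℝ (Fin N)) (ε : ℝ)
    (hadapt : Adapted ℱ fun k ω => ‖x k ω‖ + ε ^ 3 / 2 ^ k)
    (hint : ∀ k, Integrable (fun ω => ‖x k ω‖) μ)
    (hcond : ∀ k, (μ[(fun ω => ‖x (k + 1) ω‖) | ℱ k]) ≤ᵐ[μ]
      fun ω => (1 / 2) * (‖x k ω‖ + ε) + (1 / 2) * (‖x k ω‖ + ε ^ 3 / 2 ^ k - ε)) :
    Supermartingale (fun k ω => ‖x k ω‖ + ε ^ 3 / 2 ^ k) ℱ μ := by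
  refine supermartingale_add_const_of_condExp_le (X := fun k ω => ‖x k ω‖) hadapt hint
    fun k => (hcond k).trans_eq (Filter.Eventually.of_forall fun ω => ?_)
  ring

/-- In the Tug-of-War game where one player pulls towards the origin, so that with
probability `1/2` one has `|x_{k+1}| ≤ |x_k| + ε` and with probability `1/2`
`|x_{k+1}| = |x_k| + ε³/2^k − ε` (expressed via the conditional expectation bound below),
the sequence `N_k = |x_k| + ε³/2^k` is a supermartingale. -/
theorem statement11 {Ω : Type*} [m : MeasurableSpace Ω] (μ : Measure Ω)
    [IsProbabilityMeasure μ] (ℱ : Filtration ℕ m) (N : ℕ)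
    (x : ℕ → Ω → EuclideanSpace ℝ (Fin N)) (ε : ℝ) (hε : ε ∈ Set.Ioo (0 : ℝ) 1)
    (hadapt : Adapted ℱ fun k ω => ‖x k ω‖ + ε ^ 3 / 2 ^ k)
    (hint : ∀ k, Integrable (fun ω => ‖x k ω‖) μ)
    (hcond : ∀ k, (μ[(fun ω => ‖x (k + 1) ω‖) | ℱ k]) ≤ᵐ[μ]
      fun ω => (1 / 2) * (‖x k ω‖ + ε) + (1 / 2) * (‖x k ω‖ + ε ^ 3 / 2 ^ k - ε)) :
    Supermartingale (fun k ω => ‖x k ω‖ + ε ^ 3 / 2 ^ k) ℱ μ :=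
  statement11_general (m := m) μ ℱ N x ε hadapt hint hcond
end

section
/- In the setting of the pull-towards-0 strategy, the conditional second-moment estimate E[(N_{k+1} − N_k)² | N_k] ≥ ε²/3 holds for all ε small enough, where N_k = |x_k| + ε³/2^k. -/
/-!
The squared increment dominates `c·1_A` with `c = (ε − ε³/2^{k+1})² ≥ 2ε²/3`, so by
monotonicity its conditional expectation is at least `c · P(A | ℱ k) = c/2 ≥ ε²/3`.
-/

open MeasureTheory

section CondExp

variable {Ω : Type*} {m m₀ : MeasurableSpace Ω} {μ : Measure Ω} [IsFiniteMeasure μ]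

theorem const_mul_condExp_indicator_le_condExp {f : Ω → ℝ} {A : Set Ω} {c : ℝ}
    (hf : Integrable f μ) (hA : MeasurableSet A) (hf_nonneg : 0 ≤ f)
    (hcA : ∀ ω ∈ A, c ≤ f ω) :
    (fun ω => c * μ[A.indicator (fun _ => (1 : ℝ)) | m] ω) ≤ᵐ[μ] μ[f | m] := by
  have hle : A.indicator (fun _ => c) ≤ f := by
    intro ω
    by_cases hω : ω ∈ A
    · simpa [hω] using hcA ω hω
    · simpa [hω] using hf_nonneg ω
  have hsmul : A.indicator (fun _ => c) = c • A.indicator (fun _ => (1 : ℝ)) := by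
    funext ω
    by_cases hω : ω ∈ A <;> simp [hω]
  have hmono : μ[A.indicator (fun _ => c) | m] ≤ᵐ[μ] μ[f | m] :=
    condExp_mono ((integrable_const c).indicator hA) hf (Filter.Eventually.of_forall hle)
  filter_upwards [hmono, hsmul ▸ condExp_smul (m := m) (μ := μ) c
    (A.indicator fun _ => (1 : ℝ))] with ω hω hω'
  simpa [hω'] using hω

end CondExp

theorem two_thirds_mul_sq_le_sq_neg_add {ε δ : ℝ} (hε : 0 ≤ ε) (hδ : δ ≤ ε / 8) :
    2 / 3 * ε ^ 2 ≤ (-ε + δ) ^ 2 := by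
  nlinarith

theorem cube_div_two_pow_succ_le {ε : ℝ} (hε : 0 ≤ ε) (hε' : ε ≤ 1 / 2) (k : ℕ) :
    ε ^ 3 / 2 ^ (k + 1) ≤ ε / 8 := by
  have hpow : (2 : ℝ) ≤ 2 ^ (k + 1) := le_self_pow₀ (by norm_num) (by omega)
  calc ε ^ 3 / 2 ^ (k + 1) ≤ ε ^ 3 / 2 := by gcongr
    _ ≤ ε / 8 := by nlinarith [mul_nonneg hε hε]

/-- Conditional second-moment estimate for the pull-towards-0 strategy: if on an event `A`
of conditional probability `1/2` given `ℱ k` one has `N_{k+1} − N_k = −ε + ε³/2^{k+1}`, then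
for all `ε` small enough, `E[(N_{k+1} − N_k)² | ℱ k] ≥ ε²/3`. -/
theorem statement12 : ∃ ε₀ > (0 : ℝ),
    ∀ (Ω : Type) (m : MeasurableSpace Ω) (μ : Measure Ω), IsProbabilityMeasure μ →
    ∀ (ℱ : Filtration ℕ m) (ε : ℝ), 0 < ε → ε < ε₀ →
    ∀ (Nseq : ℕ → Ω → ℝ) (k : ℕ) (A : Set Ω), MeasurableSet A →
    Integrable (fun ω => (Nseq (k + 1) ω - Nseq k ω) ^ 2) μ →
    (μ[A.indicator (fun _ => (1 : ℝ)) | ℱ k] =ᵐ[μ] fun _ => 1 / 2) →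
    (∀ ω ∈ A, Nseq (k + 1) ω - Nseq k ω = -ε + ε ^ 3 / 2 ^ (k + 1)) →
    (fun _ => ε ^ 2 / 3) ≤ᵐ[μ] μ[(fun ω => (Nseq (k + 1) ω - Nseq k ω) ^ 2) | ℱ k] := by
  refine ⟨1 / 2, by norm_num, ?_⟩
  intro Ω m μ _ ℱ ε hε hε₀ Nseq k A hA hInt hcond hstep
  have hc : 2 / 3 * ε ^ 2 ≤ (-ε + ε ^ 3 / 2 ^ (k + 1)) ^ 2 :=
    two_thirds_mul_sq_le_sq_neg_add hε.le (cube_div_two_pow_succ_le hε.le hε₀.le k)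
  have hbound := const_mul_condExp_indicator_le_condExp (m := ℱ k) hInt hA
    (fun ω => sq_nonneg _) (fun ω hω => by rw [hstep ω hω])
  filter_upwards [hbound, hcond] with ω hω hω'
  rw [hω'] at hω
  linarith
end
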